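/- In the IAM-Q market of the previous example (schools c₁,c₂,c₃ with capacities 1,3,1, quotas (1,1,1), students and priorities as given), the deviation where s₂ reports only c₁ and s₅ reports only c₃ (others truthful) yields the IAM-Q outcome s₂→c₁, {s₁,s₄}→c₂, s₅→c₃, which s₂ strictly prefers (under her true preference c₂ P c₁ P c₃) to her truthful-profile assignment c₃; hence truthful reporting is not a Nash equilibrium of the IAM-Q preference revelation game in this market. -/

import Mathlib

open Finset

/-- A school choice market with affirmative actions: students `α`, schools `β`.
`minority s` says whether student `s` is a minority student; `prio c` is the ranking
of students by school `c` (lower number = higher priority); `cap c` is the capacity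
`q_c`; `quota c` is the majority quota `q^M_c` (the corresponding minority reserve is
`r^m_c = q_c - q^M_c`). -/
structure Market (α β : Type*) where
  minority : α → Bool
  prio : β → α → ℕ
  cap : β → ℕ
  quota : β → ℕ

namespace Market

noncomputable section
open scoped Classical

variable {α β : Type*} [Fintype α] [DecidableEq α] [Fintype β] [DecidableEq β]

/-- The minority reserve corresponding to the majority quota: `r^m_c = q_c - q^M_c`. -/
def reserve (M : Market α β) (c : β) : ℕ := M.cap c - M.quota c

/-- Number of students assigned to school `c` under assignment `μ`. -/
def assignedCard (μ : α → Option β) (c : β) : ℕ :=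
  (univ.filter fun s => μ s = some c).card

/-- Number of majority students assigned to school `c`. -/
def majCard (M : Market α β) (μ : α → Option β) (c : β) : ℕ :=
  (univ.filter fun s => μ s = some c ∧ M.minority s = false).card

/-- Number of minority students assigned to school `c`. -/
def minCard (M : Market α β) (μ : α → Option β) (c : β) : ℕ :=
  (univ.filter fun s => μ s = some c ∧ M.minority s = true).card

/-- One applicant is considered: accepted if capacity remains and (for a majority
student) the majority quota is not yet exhausted. -/
def acceptFold (isMin : α → Bool) (st : List α × ℕ × ℕ) (a : α) : List α × ℕ × ℕ :=
  match st with
  | (acc, cLeft, qLeft) =>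
    if cLeft = 0 then (acc, cLeft, qLeft)
    else if isMin a then (a :: acc, cLeft - 1, qLeft)
    else if 0 < qLeft then (a :: acc, cLeft - 1, qLeft - 1)
    else (acc, cLeft, qLeft)

/-- The set of applicants a school permanently accepts in one round of the immediate
acceptance algorithm: first minority applicants up to the remaining minority reserve in
priority order, then remaining applicants in priority order up to remaining capacity,
never exceeding the remaining majority quota for majority students. -/
def acceptList (prio : α → ℕ) (isMin : α → Bool) (apps : List α)
    (capLeft quotaLeft resLeft : ℕ) : List α :=
  let sorted := apps.mergeSort (fun a b => prio a ≤ prio b)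
  let resAcc := (sorted.filter fun a => isMin a).take resLeft
  let rest := sorted.filter fun a => ¬ a ∈ resAcc
  resAcc ++ (rest.foldl (acceptFold isMin) ([], capLeft - resAcc.length, quotaLeft)).1

/-- State of the immediate acceptance algorithm: current (permanent) assignment and the
position of each student in her reported preference list. -/
structure IAMState (α β : Type*) where
  assign : α → Option β
  pos : α → ℕ

/-- One round of the immediate acceptance mechanism with affirmative actions.
If `useReserve = false` this is the majority-quota version (IAM-Q, `r^m = 0`);
if `useReserve = true` this is the minority-reserve version (IAM-R, `q^M = q`). -/
def iamRound (M : Market α β) (rep : α → List β) (useReserve : Bool)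
    (st : IAMState α β) : IAMState α β :=
  let capLeft : β → ℕ := fun c => M.cap c - assignedCard st.assign c
  let quotaLeft : β → ℕ := fun c =>
    if useReserve then capLeft c else M.quota c - majCard M st.assign c
  let resLeft : β → ℕ := fun c =>
    if useReserve then M.reserve c - minCard M st.assign c else 0
  let applies : α → Option β := fun s =>
    if st.assign s = none then (rep s)[st.pos s]? else none
  let accepted : β → List α := fun c =>
    acceptList (M.prio c) M.minority
      ((univ.filter fun s => applies s = some c).toList) (capLeft c) (quotaLeft c)
      (resLeft c)
  { assign := fun s =>
      match st.assign s with
      | some c => some c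
      | none =>
        match applies s with
        | some c => if s ∈ accepted c then some c else none
        | none => none
    pos := fun s => if (applies s).isSome then st.pos s + 1 else st.pos s }

/-- The immediate acceptance mechanism with affirmative actions (outcome). -/
def iam (M : Market α β) (rep : α → List β) (useReserve : Bool) : α → Option β :=
  ((iamRound M rep useReserve)^[(univ.sup fun s => (rep s).length) + 1]
    ⟨fun _ => none, fun _ => 0⟩).assign

/-- State of the top trading cycles algorithm. -/
structure TTCState (α β : Type*) where
  remaining : Finset α
  assign : α → Option β

/-- The student a school points to: if the reserve counter is positive and a minority
student remains, its highest-priority remaining minority student; otherwise its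
highest-priority remaining student. -/
def schoolPoint (M : Market α β) (useReserve : Bool) (st : TTCState α β) (c : β) :
    Option α :=
  let resLeft := if useReserve then M.reserve c - minCard M st.assign c else 0
  let mins := st.remaining.filter fun s => M.minority s = true
  if 0 < resLeft ∧ mins.Nonempty then mins.toList.argmin (M.prio c)
  else st.remaining.toList.argmin (M.prio c)

/-- The school a student points to: her most preferred acceptable school with a
remaining seat for her (positive capacity counter and, for a majority student in the
quota version, positive quota counter); `none` means she points to herself. -/
def studentPoint (M : Market α β) (rep : α → List β) (useReserve : Bool)
    (st : TTCState α β) (s : α) : Option β :=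
  (rep s).find? fun c =>
    decide (0 < M.cap c - assignedCard st.assign c ∧
      (M.minority s = true ∨ useReserve = true ∨ 0 < M.quota c - majCard M st.assign c))

/-- The successor map: a student points to a school which points back to a student. -/
def nextMap (M : Market α β) (rep : α → List β) (useReserve : Bool)
    (st : TTCState α β) (s : α) : α :=
  match studentPoint M rep useReserve st s with
  | none => s
  | some c =>
    match schoolPoint M useReserve st c with
    | none => s
    | some t => t

/-- A student lies on a (trading) cycle of the pointing maps. -/
def inCycle (M : Market α β) (rep : α → List β) (useReserve : Bool)
    (st : TTCState α β) (s : α) : Prop :=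
  ∃ k ∈ Finset.Icc 1 (Fintype.card α), (nextMap M rep useReserve st)^[k] s = s

/-- One step of the top trading cycles mechanism with affirmative actions: all students
in cycles are assigned to the school they point to (or to themselves) and removed. -/
def ttcStep (M : Market α β) (rep : α → List β) (useReserve : Bool)
    (st : TTCState α β) : TTCState α β :=
  let cyc := st.remaining.filter fun s => inCycle M rep useReserve st s
  { remaining := st.remaining \ cyc
    assign := fun s =>
      if s ∈ cyc then studentPoint M rep useReserve st s else st.assign s }

/-- The top trading cycles mechanism with affirmative actions: `useReserve = false`
gives the TTCM with majority quotas (TTCM-Q), `useReserve = true` gives the TTCM with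
minority reserves (TTCM-R). -/
def ttcm (M : Market α β) (rep : α → List β) (useReserve : Bool) : α → Option β :=
  ((ttcStep M rep useReserve)^[Fintype.card α] ⟨univ, fun _ => none⟩).assign

/-- Rank of an outcome in a preference list: smaller is better; being unmatched (or
matched to an unlisted school) has rank equal to the length of the list. -/
def rankOf (pref : List β) : Option β → ℕ
  | none => pref.length
  | some c => pref.idxOf c

/-- Student `s` strictly prefers outcome `x` to outcome `y`. -/
def prefStrict (pref : α → List β) (s : α) (x y : Option β) : Prop :=
  rankOf (pref s) x < rankOf (pref s) y

end

end Market

namespace Market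

variable {α β : Type*} [Fintype α] [DecidableEq α] [Fintype β] [DecidableEq β]

/-- Student–school pair `(s, c)` blocks matching `μ` under the minority reserve policy
`r^m = q - q^M`, with respect to the preference profile `pref`. -/
def RBlock (M : Market α β) (pref : α → List β) (μ : α → Option β)
    (s : α) (c : β) : Prop :=
  prefStrict pref s (some c) (μ s) ∧
    (assignedCard μ c < M.cap c ∨
      (M.minority s = true ∧ ∃ s', μ s' = some c ∧ M.prio c s < M.prio c s') ∨
      (M.minority s = false ∧ M.reserve c < minCard M μ c ∧
        ∃ s', μ s' = some c ∧ M.prio c s < M.prio c s') ∨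
      (M.minority s = false ∧ minCard M μ c ≤ M.reserve c ∧
        ∃ s', μ s' = some c ∧ M.minority s' = false ∧ M.prio c s < M.prio c s'))

/-- `μ` is R-stable w.r.t. `pref`: every student weakly prefers her assignment to being
unmatched, and no student–school pair blocks `μ` under the minority reserve policy. -/
def RStable (M : Market α β) (pref : α → List β) (μ : α → Option β) : Prop :=
  (∀ s c, μ s = some c → c ∈ pref s) ∧ ∀ s c, ¬ RBlock M pref μ s c

/-- `μ` respects school capacities. -/
def IsMatching (M : Market α β) (μ : α → Option β) : Prop :=
  ∀ c, assignedCard μ c ≤ M.cap c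

/-- `rep` is a Nash equilibrium of the preference revelation game induced by the IAM
(with reserve if `useReserve`, with quota otherwise), evaluated at the true preferences
`truePref`: no student has a report giving her a strictly better assignment. -/
def NashEq (M : Market α β) (truePref rep : α → List β) (useReserve : Bool) : Prop :=
  ∀ s dev, ¬ prefStrict truePref s
    (iam M (Function.update rep s dev) useReserve s) (iam M rep useReserve s)

end Market

/-!
Everything is a finite computation, evaluated by `decide`. Truthfully, s₁, s₂, s₃, s₄ all apply
to c₂ first; c₂ takes only s₁ because of its majority quota 1 and s₄ because she is a minority
student, while s₅ takes c₁. Rejected in round one, s₂ finds c₁ full and ends at c₃. Reporting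
c₁ first, s₂ beats s₅ in c₁'s priority and gets c₁, which she prefers to c₃.
-/

theorem List.Perm.mergeSort_eq_insertionSort_of_injective {α γ : Type*} [LinearOrder γ]
    {f : α → γ} (hf : Function.Injective f) {l₁ l₂ : List α} (h : l₁.Perm l₂) :
    l₁.mergeSort (fun a b => f a ≤ f b) = l₂.insertionSort (fun a b => f a ≤ f b) := by
  have : Std.Antisymm (fun a b => f a ≤ f b) := ⟨fun _ _ h₁ h₂ => hf (le_antisymm h₁ h₂)⟩
  have : Std.Total (fun a b => f a ≤ f b) := ⟨fun a b => le_total (f a) (f b)⟩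
  have : IsTrans α (fun a b => f a ≤ f b) := ⟨fun _ _ _ => le_trans⟩
  rw [List.mergeSort_eq_insertionSort (fun a b => f a ≤ f b)]
  exact ((List.perm_insertionSort _ l₁).trans (h.trans (List.perm_insertionSort _ l₂).symm))
    |>.eq_of_pairwise' (List.pairwise_insertionSort _ _) (List.pairwise_insertionSort _ _)

theorem Finset.toList_filter_perm {α : Type*} [Fintype α] (p : α → Prop) [DecidablePred p]
    {l : List α} (hl : (univ : Finset α).val = l) :
    (univ.filter p).toList.Perm (l.filter fun a => decide (p a)) := by
  rw [← Multiset.coe_eq_coe, Finset.coe_toList, Finset.filter_val, hl, Multiset.filter_coe]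

namespace Market

variable {α β : Type*} [DecidableEq α]

/-! `Finset.toList` and `List.mergeSort` do not reduce in the kernel, so `decide` cannot run
`iam` itself; the primed versions sort by insertion and read the applicants off a list `l`
enumerating the students. -/

def acceptList' (prio : α → ℕ) (isMin : α → Bool) (apps : List α)
    (capLeft quotaLeft resLeft : ℕ) : List α :=
  let sorted := apps.insertionSort (fun a b => prio a ≤ prio b)
  let resAcc := (sorted.filter fun a => isMin a).take resLeft
  let rest := sorted.filter fun a => ¬ a ∈ resAcc
  resAcc ++ (rest.foldl (acceptFold isMin) ([], capLeft - resAcc.length, quotaLeft)).1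

theorem acceptList_eq_acceptList' {prio : α → ℕ} (hprio : Function.Injective prio)
    (isMin : α → Bool) {apps l : List α} (h : apps.Perm l) (capLeft quotaLeft resLeft : ℕ) :
    acceptList prio isMin apps capLeft quotaLeft resLeft =
      acceptList' prio isMin l capLeft quotaLeft resLeft := by
  unfold acceptList acceptList'
  rw [h.mergeSort_eq_insertionSort_of_injective hprio]

variable [Fintype α] [DecidableEq β]

def iamRound' (M : Market α β) (rep : α → List β) (useReserve : Bool) (l : List α)
    (st : IAMState α β) : IAMState α β :=
  let capLeft : β → ℕ := fun c => M.cap c - assignedCard st.assign c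
  let quotaLeft : β → ℕ := fun c =>
    if useReserve then capLeft c else M.quota c - majCard M st.assign c
  let resLeft : β → ℕ := fun c =>
    if useReserve then M.reserve c - minCard M st.assign c else 0
  let applies : α → Option β := fun s =>
    if st.assign s = none then (rep s)[st.pos s]? else none
  let accepted : β → List α := fun c =>
    acceptList' (M.prio c) M.minority (l.filter fun s => decide (applies s = some c))
      (capLeft c) (quotaLeft c) (resLeft c)
  { assign := fun s =>
      match st.assign s with
      | some c => some c
      | none =>
        match applies s with
        | some c => if s ∈ accepted c then some c else none
        | none => none
    pos := fun s => if (applies s).isSome then st.pos s + 1 else st.pos s }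

def iam' (M : Market α β) (rep : α → List β) (useReserve : Bool) (l : List α) : α → Option β :=
  ((iamRound' M rep useReserve l)^[(univ.sup fun s => (rep s).length) + 1]
    ⟨fun _ => none, fun _ => 0⟩).assign

theorem iamRound_eq_iamRound' (M : Market α β) (rep : α → List β) (useReserve : Bool)
    {l : List α} (hl : (univ : Finset α).val = l) (hprio : ∀ c, Function.Injective (M.prio c)) :
    iamRound M rep useReserve = iamRound' M rep useReserve l := by
  funext st
  unfold iamRound iamRound'
  simp only [acceptList_eq_acceptList' (hprio _) _ (toList_filter_perm _ hl)]

theorem iam_eq_iam' (M : Market α β) (rep : α → List β) (useReserve : Bool)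
    {l : List α} (hl : (univ : Finset α).val = l) (hprio : ∀ c, Function.Injective (M.prio c)) :
    iam M rep useReserve = iam' M rep useReserve l := by
  unfold iam iam'
  rw [iamRound_eq_iamRound' M rep useReserve hl hprio]

end Market

open Market in
/-- In the IAM-Q market of the previous example, the deviation where s₂ reports only c₁
and s₅ reports only c₃ (others truthful) yields the IAM-Q outcome s₂→c₁, {s₁,s₄}→c₂,
s₅→c₃, which s₂ strictly prefers (under her true preferences) to her truthful-profile
assignment c₃; hence truthful reporting is not a Nash equilibrium of the IAM-Q game. -/
theorem iamQ_truthful_not_nash_example :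
    let M : Market (Fin 5) (Fin 3) :=
      { minority := ![false, false, false, true, true]
        prio := ![![0, 1, 2, 3, 4], ![0, 1, 2, 3, 4], ![2, 3, 4, 0, 1]]
        cap := ![1, 3, 1]
        quota := ![1, 1, 1] }
    let rep : Fin 5 → List (Fin 3) :=
      ![[1, 0, 2], [1, 0, 2], [1, 0, 2], [1, 0, 2], [0, 2, 1]]
    let rep' : Fin 5 → List (Fin 3) :=
      Function.update (Function.update rep 1 [0]) 4 [2]
    iam M rep' false = ![some 1, some 0, none, some 1, some 2] ∧
      prefStrict rep 1 (iam M rep' false 1) (iam M rep false 1) ∧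
      ¬ NashEq M rep rep false := by
  intro M rep rep'
  have hprio : ∀ c, Function.Injective (M.prio c) := by unfold Function.Injective; decide
  have hiam (r : Fin 5 → List (Fin 3)) : iam M r false = iam' M r false (List.finRange 5) :=
    iam_eq_iam' M r false rfl hprio
  have truthful : iam M rep false 1 = some 2 := by rw [hiam]; decide
  have deviation : iam M rep' false = ![some 1, some 0, none, some 1, some 2] := by
    rw [hiam]; decide
  have unilateral : iam M (Function.update rep 1 [0]) false 1 = some 0 := by rw [hiam]; decide
  have c₁_over_c₃ : prefStrict rep 1 (some 0) (some 2) := by unfold prefStrict; decide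
  refine ⟨deviation, ?_, fun hNash => hNash 1 [0] ?_⟩
  · rw [deviation, truthful]
    exact c₁_over_c₃
  · rw [unilateral, truthful]
    exact c₁_over_c₃
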